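/- arXiv:2204.06735 — 3 statements merged into one kernel-verified Lean document; each statement's English description precedes it below -/
import Mathlib

section
/- Condition (Alg) of algebraizability for L_QN4: for every formula α, the formula α is inter-derivable with the set {α → (α → α), (α → α) → α, ∼α → ∼(α → α), ∼(α → α) → ∼α}; that is, α derives each formula of this set, and conversely the set derives α. -/
/-- Formulas of the logic L_QN4. -/
inductive Fm : Type
  | var  : ℕ → Fm
  | neg  : Fm → Fm
  | conj : Fm → Fm → Fm
  | disj : Fm → Fm → Fm
  | impl : Fm → Fm → Fm

namespace Fm

/-- α ↔ β abbreviates (α → β) ∧ (β → α). -/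
def iff (a b : Fm) : Fm := conj (impl a b) (impl b a)

end Fm

open Fm

/-- Derivability in the Hilbert calculus L_QN4. -/
inductive Deriv : Set Fm → Fm → Prop
  | prem {Γ : Set Fm} {α : Fm} : α ∈ Γ → Deriv Γ α
  | mp   {Γ : Set Fm} {α β : Fm} : Deriv Γ (impl α β) → Deriv Γ α → Deriv Γ β
  | ax1  (Γ : Set Fm) (α β : Fm) : Deriv Γ (impl α (impl β α))
  | ax2  (Γ : Set Fm) (α β γ : Fm) :
      Deriv Γ (impl (impl α (impl β γ)) (impl (impl α β) (impl α γ)))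
  | ax3  (Γ : Set Fm) (α β : Fm) : Deriv Γ (impl (conj α β) α)
  | ax4  (Γ : Set Fm) (α β : Fm) : Deriv Γ (impl (conj α β) β)
  | ax5  (Γ : Set Fm) (α β γ : Fm) :
      Deriv Γ (impl (impl α β) (impl (impl α γ) (impl α (conj β γ))))
  | ax6  (Γ : Set Fm) (α β : Fm) : Deriv Γ (impl α (disj α β))
  | ax7  (Γ : Set Fm) (α β : Fm) : Deriv Γ (impl β (disj α β))
  | ax8  (Γ : Set Fm) (α β γ : Fm) :
      Deriv Γ (impl (impl α γ) (impl (impl β γ) (impl (disj α β) γ)))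
  | ax9  (Γ : Set Fm) (α β : Fm) :
      Deriv Γ (Fm.iff (neg (disj α β)) (conj (neg α) (neg β)))
  | ax10 (Γ : Set Fm) (α β : Fm) :
      Deriv Γ (Fm.iff (neg (impl α β)) (neg (neg (conj α (neg β)))))
  | ax11 (Γ : Set Fm) (α β γ : Fm) :
      Deriv Γ (Fm.iff (neg (conj α (conj β γ))) (neg (conj (conj α β) γ)))
  | ax12 (Γ : Set Fm) (α β γ : Fm) :
      Deriv Γ (Fm.iff (neg (conj α (disj β γ))) (neg (disj (conj α β) (conj α γ))))
  | ax13 (Γ : Set Fm) (α β γ : Fm) :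
      Deriv Γ (Fm.iff (neg (disj α (conj β γ))) (neg (conj (disj α β) (disj α γ))))
  | ax14 (Γ : Set Fm) (α β : Fm) :
      Deriv Γ (Fm.iff (neg (neg (conj α β))) (conj (neg (neg α)) (neg (neg β))))
  | ax15 (Γ : Set Fm) (α : Fm) : Deriv Γ (impl α (neg (neg α)))
  | ax16 (Γ : Set Fm) (α : Fm) :
      Deriv Γ (impl α (impl (neg α) (neg (impl α α))))
  | ax17 (Γ : Set Fm) (α β : Fm) :
      Deriv Γ (impl (impl α β) (impl (neg (neg α)) (neg (neg β))))
  | ax18 (Γ : Set Fm) (α β : Fm) : Deriv Γ (impl (neg α) (neg (conj α β)))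
  | ax19 (Γ : Set Fm) (α β : Fm) : Deriv Γ (impl (neg (conj α β)) (neg (conj β α)))
  | ax20 (Γ : Set Fm) (α β : Fm) :
      Deriv Γ (impl (impl (neg α) (neg β)) (impl (neg (conj α β)) (neg β)))
  | ax21 (Γ : Set Fm) (α β γ θ : Fm) :
      Deriv Γ (impl (impl (neg α) (neg β))
        (impl (impl (neg γ) (neg θ))
          (impl (neg (conj α γ)) (neg (conj β θ)))))
  | ax22 (Γ : Set Fm) (α : Fm) : Deriv Γ (impl (neg (neg (neg α))) (neg α))

/-- The set of equivalence formulas Δ(α, β). -/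

lemma syl {Γ : Set Fm} {a b c : Fm} (h1 : Deriv Γ (impl b c)) (h2 : Deriv Γ (impl a b)) :
    Deriv Γ (impl a c) :=
  Deriv.mp (Deriv.mp (Deriv.ax2 Γ a b c) (Deriv.mp (Deriv.ax1 Γ (impl b c) a) h1)) h2

lemma idd (Γ : Set Fm) (a : Fm) : Deriv Γ (impl a a) :=
  Deriv.mp (Deriv.mp (Deriv.ax2 Γ a (impl a a) a) (Deriv.ax1 Γ a (impl a a))) (Deriv.ax1 Γ a a)

lemma iff_fwd {Γ : Set Fm} {a b : Fm} (h : Deriv Γ (Fm.iff a b)) : Deriv Γ (impl a b) :=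
  Deriv.mp (Deriv.ax3 Γ _ _) h

def Delta (α β : Fm) : Set Fm :=
  {impl α β, impl β α, impl (neg α) (neg β), impl (neg β) (neg α)}

theorem alg_condition (α : Fm) :
    (∀ φ ∈ ({impl α (impl α α), impl (impl α α) α,
        impl (neg α) (neg (impl α α)),
        impl (neg (impl α α)) (neg α)} : Set Fm), Deriv {α} φ) ∧
    Deriv ({impl α (impl α α), impl (impl α α) α,
        impl (neg α) (neg (impl α α)),
        impl (neg (impl α α)) (neg α)} : Set Fm) α := by
  constructor
  · intro φ hφ
    have hα : Deriv {α} α := Deriv.prem rfl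
    rcases hφ with rfl | rfl | rfl | rfl
    · exact Deriv.ax1 _ α α
    · exact Deriv.mp (Deriv.ax1 _ α (impl α α)) hα
    · exact Deriv.mp (Deriv.ax16 _ α) hα
    · -- ∼(α→α) → ∼α, a theorem
      have h1 : Deriv {α} (impl (neg (impl α α)) (neg (neg (conj α (neg α))))) :=
        iff_fwd (Deriv.ax10 _ α α)
      have h2 : Deriv {α} (impl (neg (neg (conj α (neg α))))
          (conj (neg (neg α)) (neg (neg (neg α))))) := iff_fwd (Deriv.ax14 _ α (neg α))
      have h3 : Deriv {α} (impl (conj (neg (neg α)) (neg (neg (neg α)))) (neg (neg (neg α)))) :=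
        Deriv.ax4 _ _ _
      exact syl (Deriv.ax22 _ α) (syl h3 (syl h2 h1))
  · have h : Deriv ({impl α (impl α α), impl (impl α α) α,
        impl (neg α) (neg (impl α α)),
        impl (neg (impl α α)) (neg α)} : Set Fm) (impl (impl α α) α) :=
      Deriv.prem (by simp [Set.mem_insert_iff])
    exact Deriv.mp h (idd _ _)
end

section
/- Congruence condition for ∼ in L_QN4: for all formulas α, β, the set Δ(α,β) = {α → β, β → α, ∼α → ∼β, ∼β → ∼α} derives each of the four formulas ∼α → ∼β, ∼β → ∼α, ∼∼α → ∼∼β, and ∼∼β → ∼∼α; that is, Δ(α,β) ⊢ Δ(∼α, ∼β). -/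
open Fm

theorem cong_neg (α β : Fm) :
    ∀ φ ∈ Delta (neg α) (neg β), Deriv (Delta α β) φ := by
  intro φ hφ
  have h1 : Deriv (Delta α β) (impl α β) := Deriv.prem (by simp [Delta])
  have h2 : Deriv (Delta α β) (impl β α) := Deriv.prem (by simp [Delta])
  have h3 : Deriv (Delta α β) (impl (neg α) (neg β)) := Deriv.prem (by simp [Delta])
  have h4 : Deriv (Delta α β) (impl (neg β) (neg α)) := Deriv.prem (by simp [Delta])
  have h5 : Deriv (Delta α β) (impl (neg (neg α)) (neg (neg β))) :=
    Deriv.mp (Deriv.ax17 _ α β) h1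
  have h6 : Deriv (Delta α β) (impl (neg (neg β)) (neg (neg α))) :=
    Deriv.mp (Deriv.ax17 _ β α) h2
  rcases hφ with h|h|h|h <;> subst h <;> assumption
end

section
/- Congruence condition for ∨ (negative part) in L_QN4: for all formulas α₁, β₁, α₂, β₂, the set Γ₁ ∪ Γ₂, where Γᵢ = {αᵢ → βᵢ, βᵢ → αᵢ, ∼αᵢ → ∼βᵢ, ∼βᵢ → ∼αᵢ}, derives ∼(α₁ ∨ α₂) → ∼(β₁ ∨ β₂). -/
open Fm

/-- Hypothetical syllogism. -/
lemma Deriv.comp {Γ : Set Fm} {a b c : Fm}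
    (h1 : Deriv Γ (impl a b)) (h2 : Deriv Γ (impl b c)) :
    Deriv Γ (impl a c) :=
  Deriv.mp (Deriv.mp (Deriv.ax2 Γ a b c)
    (Deriv.mp (Deriv.ax1 Γ (impl b c) a) h2)) h1

theorem cong_disj_neg (α₁ β₁ α₂ β₂ : Fm) :
    Deriv (Delta α₁ β₁ ∪ Delta α₂ β₂)
      (impl (neg (disj α₁ α₂)) (neg (disj β₁ β₂))) := by
  set Γ := Delta α₁ β₁ ∪ Delta α₂ β₂
  have p1 : Deriv Γ (impl (neg α₁) (neg β₁)) :=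
    Deriv.prem (Or.inl (by simp [Delta]))
  have p2 : Deriv Γ (impl (neg α₂) (neg β₂)) :=
    Deriv.prem (Or.inr (by simp [Delta]))
  -- ∼(α₁∨α₂) → ∼α₁∧∼α₂
  have h1 : Deriv Γ (impl (neg (disj α₁ α₂)) (conj (neg α₁) (neg α₂))) :=
    Deriv.mp (Deriv.ax3 Γ _ _) (Deriv.ax9 Γ α₁ α₂)
  -- ∼α₁∧∼α₂ → ∼β₁∧∼β₂
  have c1 : Deriv Γ (impl (conj (neg α₁) (neg α₂)) (neg β₁)) :=
    Deriv.comp (Deriv.ax3 Γ _ _) p1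
  have c2 : Deriv Γ (impl (conj (neg α₁) (neg α₂)) (neg β₂)) :=
    Deriv.comp (Deriv.ax4 Γ _ _) p2
  have h2 : Deriv Γ (impl (conj (neg α₁) (neg α₂)) (conj (neg β₁) (neg β₂))) :=
    Deriv.mp (Deriv.mp (Deriv.ax5 Γ _ _ _) c1) c2
  -- ∼β₁∧∼β₂ → ∼(β₁∨β₂)
  have h3 : Deriv Γ (impl (conj (neg β₁) (neg β₂)) (neg (disj β₁ β₂))) :=
    Deriv.mp (Deriv.ax4 Γ _ _) (Deriv.ax9 Γ β₁ β₂)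
  exact Deriv.comp (Deriv.comp h1 h2) h3
end
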